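/- Let $a < b$ be real numbers, $n > 0$, $m := \lceil n \rceil$ the least integer $\ge n$, and let $f : [a,b] \to \mathbb{R}$ be continuous. Then the function $J_a^{m-n}(J_a^n f)$ (which equals $J_a^m f$) is $m$-times differentiable on $[a,b]$ and its $m$-th derivative equals $f$ everywhere on $[a,b]$; that is, $D_a^n J_a^n f = f$ pointwise on $[a,b]$. (This is the fundamental theorem of fractional calculus: the Riemann–Liouville fractional differential operator of order $n$ inverts the Riemann–Liouville fractional integral operator of order $n$; the paper proves it on all of $D_{HK}$, and here it is stated for continuous $f$.) -/

import Mathlib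

open MeasureTheory Set

/-- The Riemann–Liouville fractional integral of order `n` based at `a`,
with `J_a^0` the identity operator. -/
noncomputable def rlInt (a n : ℝ) (h : ℝ → ℝ) : ℝ → ℝ :=
  if n = 0 then h else fun x => (1 / Real.Gamma n) * ∫ t in a..x, (x - t) ^ (n - 1) * h t

/-!
The semigroup law `J^α J^β = J^(α+β)` (Dirichlet's formula for swapping the order of integration
over a triangle, plus the Beta integral `B(α, β) = Γ(α) Γ(β) / Γ(α + β)`) gives
`J^(m-n) J^n f = J^m f`. For integer orders `J^(j+1) f` is the primitive of `J^j f`, so the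
fundamental theorem of calculus differentiates `J^m f` exactly `m` times down to `f`.
-/

theorem integral_rpow_mul_one_sub_rpow {u v : ℝ} (hu : 0 < u) (hv : 0 < v) :
    ∫ s in (0 : ℝ)..1, s ^ (u - 1) * (1 - s) ^ (v - 1) =
      Real.Gamma u * Real.Gamma v / Real.Gamma (u + v) := by
  have hcast : Complex.betaIntegral u v =
      ((∫ s in (0 : ℝ)..1, s ^ (u - 1) * (1 - s) ^ (v - 1) : ℝ) : ℂ) := by
    rw [Complex.betaIntegral, ← intervalIntegral.integral_ofReal]
    refine intervalIntegral.integral_congr fun s hs => ?_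
    rw [uIcc_of_le zero_le_one] at hs
    rw [Complex.ofReal_mul, Complex.ofReal_cpow hs.1, Complex.ofReal_cpow (by linarith [hs.2])]
    push_cast
    ring
  have h := Complex.betaIntegral_eq_Gamma_mul_div u v (by simpa using hu) (by simpa using hv)
  rw [hcast, ← Complex.ofReal_add, Complex.Gamma_ofReal, Complex.Gamma_ofReal,
    Complex.Gamma_ofReal] at h
  exact_mod_cast h

theorem integral_sub_rpow_mul_sub_rpow {α β t x : ℝ} (hα : 0 < α) (hβ : 0 < β)
    (htx : t < x) :
    ∫ s in t..x, (x - s) ^ (α - 1) * (s - t) ^ (β - 1) =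
      Real.Gamma α * Real.Gamma β / Real.Gamma (α + β) * (x - t) ^ (α + β - 1) := by
  have hxt : 0 < x - t := sub_pos.mpr htx
  have hscale := intervalIntegral.smul_integral_comp_add_mul
    (fun s => (x - s) ^ (α - 1) * (s - t) ^ (β - 1)) (a := 0) (b := 1) (x - t) t
  simp only [mul_zero, add_zero, mul_one, add_sub_cancel] at hscale
  rw [← hscale, smul_eq_mul, mul_comm (Real.Gamma α), add_comm α β,
    ← integral_rpow_mul_one_sub_rpow hβ hα, ← intervalIntegral.integral_mul_const,
    ← intervalIntegral.integral_const_mul]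
  refine intervalIntegral.integral_congr fun s hs => ?_
  rw [uIcc_of_le zero_le_one] at hs
  rw [show x - (t + (x - t) * s) = (x - t) * (1 - s) by ring,
    show t + (x - t) * s - t = (x - t) * s by ring,
    Real.mul_rpow hxt.le (by linarith [hs.2]), Real.mul_rpow hxt.le hs.1,
    show β + α - 1 = 1 + (α - 1) + (β - 1) by ring, Real.rpow_add hxt, Real.rpow_add hxt,
    Real.rpow_one]
  ring

theorem intervalIntegrable_sub_rpow {α a x : ℝ} (hα : 0 < α) :
    IntervalIntegrable (fun t => (x - t) ^ (α - 1)) volume a x := by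
  simpa using (intervalIntegral.intervalIntegrable_rpow' (a := x - a) (b := x - x)
    (by linarith : (-1 : ℝ) < α - 1)).comp_sub_left x

theorem integral_sub_rpow {α a x : ℝ} (hα : 0 < α) :
    ∫ t in a..x, (x - t) ^ (α - 1) = (x - a) ^ α / α := by
  rw [intervalIntegral.integral_comp_sub_left (fun u => u ^ (α - 1)) x, sub_self,
    integral_rpow (Or.inl (by linarith)), sub_add_cancel, Real.zero_rpow hα.ne']
  ring

theorem setIntegral_Ioc_indicator_Iio {a x s : ℝ} (hs : s ∈ Ioc a x) (g : ℝ → ℝ) :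
    ∫ t in Ioc a x, (Iio s).indicator g t = ∫ t in a..s, g t := by
  rw [setIntegral_indicator measurableSet_Iio, intervalIntegral.integral_of_le hs.1.le,
    integral_Ioc_eq_integral_Ioo]
  congr 2
  ext t
  exact ⟨fun h => ⟨h.1.1, h.2⟩, fun h => ⟨⟨h.1, h.2.le.trans hs.2⟩, h.2⟩⟩

section Triangle

variable {a x : ℝ}

local notation "μ" => volume.restrict (Ioc a x)

theorem integrable_indicator_sub_rpow_mul_sub_rpow {α β : ℝ} (hα : 0 < α) (hβ : 0 < β) :
    Integrable ({p : ℝ × ℝ | p.2 < p.1}.indicator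
      (Function.uncurry fun s t => (x - s) ^ (α - 1) * (s - t) ^ (β - 1)))
      (Measure.prod μ μ) := by
  set K := {p : ℝ × ℝ | p.2 < p.1}.indicator
    (Function.uncurry fun s t => (x - s) ^ (α - 1) * (s - t) ^ (β - 1))
  have hmeas : AEStronglyMeasurable K (Measure.prod μ μ) :=
    (Measurable.indicator (by fun_prop)
      (measurableSet_lt measurable_snd measurable_fst)).aestronglyMeasurable
  have hslice : ∀ s, (fun t => K (s, t)) =
      (Iio s).indicator fun t => (x - s) ^ (α - 1) * (s - t) ^ (β - 1) := by
    intro s; ext t; simp [K, Set.indicator_apply]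
  refine (integrable_prod_iff hmeas).mpr ⟨?_, ?_⟩
  · filter_upwards [ae_restrict_mem measurableSet_Ioc] with s hs
    rw [hslice, integrable_indicator_iff measurableSet_Iio, IntegrableOn,
      Measure.restrict_restrict measurableSet_Iio]
    refine IntegrableOn.mono_set ?_
      (fun t ht => ⟨ht.2.1, ht.1.le⟩ : Iio s ∩ Ioc a x ⊆ Ioc a s)
    exact ((intervalIntegrable_sub_rpow hβ).const_mul _).1
  · have hnorm : ∀ s ∈ Ioc a x,
        ∫ t, ‖K (s, t)‖ ∂μ = (x - s) ^ (α - 1) * ((s - a) ^ β / β) := by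
      intro s hs
      simp only [fun t => congrFun (hslice s) t, norm_indicator_eq_indicator_norm]
      rw [setIntegral_Ioc_indicator_Iio hs, ← integral_sub_rpow hβ,
        ← intervalIntegral.integral_const_mul]
      refine intervalIntegral.integral_congr fun t ht => ?_
      rw [uIcc_of_le hs.1.le] at ht
      simp only [norm_mul, Real.norm_eq_abs]
      rw [abs_of_nonneg (Real.rpow_nonneg (by linarith [hs.2]) _),
        abs_of_nonneg (Real.rpow_nonneg (by linarith [ht.2]) _)]
    refine Integrable.congr ?_ ((ae_restrict_iff' measurableSet_Ioc).mpr
      (Filter.Eventually.of_forall fun s hs => (hnorm s hs).symm))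
    refine ((intervalIntegrable_sub_rpow hα).mul_continuousOn ?_).1
    exact ((continuous_id.sub continuous_const).rpow_const
      fun _ => Or.inr hβ.le).continuousOn.div_const β

theorem integrable_indicator_sub_rpow_mul_sub_rpow_mul {α β : ℝ} (hα : 0 < α) (hβ : 0 < β)
    {f : ℝ → ℝ} (hf : ContinuousOn f (Icc a x)) :
    Integrable ({p : ℝ × ℝ | p.2 < p.1}.indicator
      (Function.uncurry fun s t => (x - s) ^ (α - 1) * (s - t) ^ (β - 1) * f t))
      (Measure.prod μ μ) := by
  obtain ⟨C, hC⟩ := isCompact_Icc.exists_bound_of_continuousOn hf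
  have hf_ae : ∀ᵐ t ∂μ, ‖f t‖ ≤ C := by
    filter_upwards [ae_restrict_mem measurableSet_Ioc] with t ht
    exact hC t (Ioc_subset_Icc_self ht)
  have hfactor : {p : ℝ × ℝ | p.2 < p.1}.indicator
      (Function.uncurry fun s t => (x - s) ^ (α - 1) * (s - t) ^ (β - 1) * f t) =
      fun p => {p : ℝ × ℝ | p.2 < p.1}.indicator
        (Function.uncurry fun s t => (x - s) ^ (α - 1) * (s - t) ^ (β - 1)) p * f p.2 := by
    ext ⟨s, t⟩
    by_cases hts : t < s <;> simp [hts]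
  rw [hfactor]
  exact (integrable_indicator_sub_rpow_mul_sub_rpow hα hβ).mul_bdd
    ((hf.mono Ioc_subset_Icc_self).aestronglyMeasurable measurableSet_Ioc).comp_snd
    (Measure.quasiMeasurePreserving_snd.ae hf_ae)

end Triangle

theorem integral_integral_swap_triangle {a x : ℝ} (hax : a ≤ x) {F : ℝ → ℝ → ℝ}
    (hF : Integrable ({p : ℝ × ℝ | p.2 < p.1}.indicator (Function.uncurry F))
      ((volume.restrict (Ioc a x)).prod (volume.restrict (Ioc a x)))) :
    ∫ s in a..x, ∫ t in a..s, F s t = ∫ t in a..x, ∫ s in t..x, F s t := by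
  set G : ℝ → ℝ → ℝ := fun s t => (Iio s).indicator (F s) t
  have hG : Function.uncurry G = {p : ℝ × ℝ | p.2 < p.1}.indicator (Function.uncurry F) := by
    ext ⟨s, t⟩
    simp [G, Set.indicator_apply]
  have hG' : ∀ t, (fun s => G s t) = (Ioi t).indicator fun s => F s t := by
    intro t; ext s
    simp [G, Set.indicator_apply]
  rw [intervalIntegral.integral_of_le hax, intervalIntegral.integral_of_le hax]
  convert integral_integral_swap (f := G) (hG ▸ hF) using 1
  · exact setIntegral_congr_fun measurableSet_Ioc fun s hs =>
      (setIntegral_Ioc_indicator_Iio hs (F s)).symm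
  · refine setIntegral_congr_fun measurableSet_Ioc fun t ht => ?_
    rw [hG', setIntegral_indicator measurableSet_Ioi, intervalIntegral.integral_of_le ht.2,
      Ioc_inter_Ioi, max_eq_right ht.1.le]

theorem rlInt_zero (a : ℝ) (f : ℝ → ℝ) : rlInt a 0 f = f := if_pos rfl

theorem rlInt_of_ne_zero {a α : ℝ} (hα : α ≠ 0) (f : ℝ → ℝ) :
    rlInt a α f = fun x => (1 / Real.Gamma α) * ∫ t in a..x, (x - t) ^ (α - 1) * f t :=
  if_neg hα

theorem rlInt_one (a : ℝ) (f : ℝ → ℝ) : rlInt a 1 f = fun x => ∫ t in a..x, f t := by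
  simp [rlInt_of_ne_zero one_ne_zero]

theorem rlInt_rlInt {a x α β : ℝ} (hα : 0 < α) (hβ : 0 < β) {f : ℝ → ℝ}
    (hf : ContinuousOn f (Icc a x)) (hax : a ≤ x) :
    rlInt a α (rlInt a β f) x = rlInt a (α + β) f x := by
  have hkernel : ∀ t ∈ Ioo a x, ∫ s in t..x, (x - s) ^ (α - 1) * (s - t) ^ (β - 1) * f t =
      Real.Gamma α * Real.Gamma β / Real.Gamma (α + β) * ((x - t) ^ (α + β - 1) * f t) := by
    intro t ht
    rw [intervalIntegral.integral_mul_const, integral_sub_rpow_mul_sub_rpow hα hβ ht.2,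
      mul_assoc]
  have hswap := integral_integral_swap_triangle hax
    (integrable_indicator_sub_rpow_mul_sub_rpow_mul hα hβ hf)
  have hΓα := (Real.Gamma_pos_of_pos hα).ne'
  have hΓβ := (Real.Gamma_pos_of_pos hβ).ne'
  have hΓαβ := (Real.Gamma_pos_of_pos (add_pos hα hβ)).ne'
  simp only [rlInt_of_ne_zero hα.ne', rlInt_of_ne_zero hβ.ne',
    rlInt_of_ne_zero (add_pos hα hβ).ne']
  calc 1 / Real.Gamma α * ∫ s in a..x, (x - s) ^ (α - 1) *
        (1 / Real.Gamma β * ∫ t in a..s, (s - t) ^ (β - 1) * f t)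
      = 1 / (Real.Gamma α * Real.Gamma β) *
          ∫ s in a..x, ∫ t in a..s, (x - s) ^ (α - 1) * (s - t) ^ (β - 1) * f t := by
        simp only [← intervalIntegral.integral_const_mul]
        congr 1; ext s; congr 1; ext t
        field_simp
    _ = 1 / (Real.Gamma α * Real.Gamma β) *
          ∫ t in a..x, ∫ s in t..x, (x - s) ^ (α - 1) * (s - t) ^ (β - 1) * f t := by
        rw [hswap]
    _ = 1 / Real.Gamma (α + β) * ∫ t in a..x, (x - t) ^ (α + β - 1) * f t := by
        rw [intervalIntegral.integral_of_le hax, integral_Ioc_eq_integral_Ioo,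
          setIntegral_congr_fun measurableSet_Ioo hkernel, MeasureTheory.integral_const_mul,
          ← integral_Ioc_eq_integral_Ioo, ← intervalIntegral.integral_of_le hax]
        field_simp

theorem rlInt_natCast_succ {a x : ℝ} {f : ℝ → ℝ} (hf : ContinuousOn f (Icc a x)) (hax : a ≤ x)
    (j : ℕ) : rlInt a (j + 1 : ℕ) f x = ∫ t in a..x, rlInt a j f t := by
  rcases Nat.eq_zero_or_pos j with rfl | hj
  · simp [rlInt_one, rlInt_zero]
  · rw [Nat.cast_succ, add_comm, ← rlInt_rlInt one_pos (Nat.cast_pos.mpr hj) hf hax, rlInt_one]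

section NaturalOrder

variable {a b : ℝ} {f : ℝ → ℝ}

theorem eqOn_rlInt_natCast_succ (hf : ContinuousOn f (Icc a b)) (j : ℕ) :
    EqOn (rlInt a (j + 1 : ℕ) f) (fun x => ∫ t in a..x, rlInt a j f t) (Icc a b) :=
  fun _ hx => rlInt_natCast_succ (hf.mono (Icc_subset_Icc_right hx.2)) hx.1 j

theorem continuousOn_rlInt_natCast (hab : a ≤ b) (hf : ContinuousOn f (Icc a b)) (j : ℕ) :
    ContinuousOn (rlInt a j f) (Icc a b) := by
  induction j with
  | zero => simpa [rlInt_zero] using hf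
  | succ j ih =>
    have h := intervalIntegral.continuousOn_primitive_interval
      (μ := volume) (a := a) (b := b) (by rw [uIcc_of_le hab]; exact ih.integrableOn_Icc)
    rw [uIcc_of_le hab] at h
    exact h.congr (eqOn_rlInt_natCast_succ hf j)

theorem hasDerivWithinAt_rlInt_natCast_succ (hab : a ≤ b) (hf : ContinuousOn f (Icc a b))
    (j : ℕ) {x : ℝ} (hx : x ∈ Icc a b) :
    HasDerivWithinAt (rlInt a (j + 1 : ℕ) f) (rlInt a j f x) (Icc a b) x := by
  have hcont := continuousOn_rlInt_natCast hab hf j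
  have : Fact (x ∈ Icc a b) := ⟨hx⟩
  refine HasDerivWithinAt.congr ?_ (eqOn_rlInt_natCast_succ hf j)
    (eqOn_rlInt_natCast_succ hf j hx)
  refine intervalIntegral.integral_hasDerivWithinAt_right ?_
    (hcont.stronglyMeasurableAtFilter_nhdsWithin measurableSet_Icc x) (hcont x hx)
  exact (hcont.mono (Icc_subset_Icc_right hx.2)).intervalIntegrable_of_Icc hx.1

theorem iteratedDerivWithin_eq_rlInt_natCast (hab : a < b) (hf : ContinuousOn f (Icc a b))
    {m : ℕ} {F : ℝ → ℝ} (hF : EqOn F (rlInt a m f) (Icc a b)) (k : ℕ) (hk : k ≤ m) :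
    EqOn (iteratedDerivWithin k F (Icc a b)) (rlInt a (m - k : ℕ) f) (Icc a b) := by
  induction k with
  | zero => simpa using hF
  | succ k ih =>
    intro x hx
    have hderiv := hasDerivWithinAt_rlInt_natCast_succ hab.le hf (m - (k + 1)) hx
    rw [show m - (k + 1) + 1 = m - k by omega] at hderiv
    rw [iteratedDerivWithin_succ, derivWithin_congr (ih (by omega)) (ih (by omega) hx)]
    exact hderiv.derivWithin (uniqueDiffOn_Icc hab x hx)

end NaturalOrder

theorem fundamental_theorem_of_fractional_calculus (a b n : ℝ) (hab : a < b) (hn : 0 < n)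
    (f : ℝ → ℝ) (hf : ContinuousOn f (Icc a b)) :
    (∀ x ∈ Icc a b,
      rlInt a ((⌈n⌉₊ : ℝ) - n) (rlInt a n f) x = rlInt a (⌈n⌉₊ : ℝ) f x) ∧
    (∀ k < ⌈n⌉₊, ∀ x ∈ Icc a b,
      DifferentiableWithinAt ℝ
        (iteratedDerivWithin k (rlInt a ((⌈n⌉₊ : ℝ) - n) (rlInt a n f)) (Icc a b))
        (Icc a b) x) ∧
    ∀ x ∈ Icc a b,
      iteratedDerivWithin ⌈n⌉₊ (rlInt a ((⌈n⌉₊ : ℝ) - n) (rlInt a n f)) (Icc a b) x = f x := by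
  set m := ⌈n⌉₊
  have hsemigroup : EqOn (rlInt a (m - n) (rlInt a n f)) (rlInt a m f) (Icc a b) := by
    intro x hx
    rcases (sub_nonneg.mpr (Nat.le_ceil n)).eq_or_lt with hmn | hmn
    · rw [← hmn, rlInt_zero, show (m : ℝ) = n by linarith]
    · rw [rlInt_rlInt hmn hn (hf.mono (Icc_subset_Icc_right hx.2)) hx.1, sub_add_cancel]
  have hiter := iteratedDerivWithin_eq_rlInt_natCast hab hf hsemigroup
  refine ⟨hsemigroup, fun k hk x hx => ?_, fun x hx => ?_⟩
  · have hderiv := hasDerivWithinAt_rlInt_natCast_succ hab.le hf (m - (k + 1)) hx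
    rw [show m - (k + 1) + 1 = m - k by omega] at hderiv
    exact hderiv.differentiableWithinAt.congr (hiter k hk.le) (hiter k hk.le hx)
  · rw [hiter m le_rfl hx, Nat.sub_self, Nat.cast_zero, rlInt_zero]
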